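/- Let k = 𝔽_q be the finite field with q elements and let g ∈ GL₂(A) be the upper triangular matrix with diagonal entries a, d ∈ Aˣ and upper-right entry b ∈ A. If a = d and b ∈ εA ∖ {0}, then Fib(g) has exactly q elements. -/

import Mathlib

/-!
A line `A·(x, y)` stable under `g = !![a, b; 0, a]` satisfies `g (x, y) = c (x, y)`,
i.e. `(c - a) y = 0` and `(c - a) x = b y`; hence `b y² = 0`, and since `b ≠ 0` this forces
`y ∈ εA`. As `(x, y) ∉ εA²`, `x` is then a unit and the line is `A·(1, sε)` for a unique
`s ∈ k`. Conversely `bε = 0`, so `g` acts on each line `A·(1, sε)` as the scalar `a`.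
-/

open Matrix
open scoped DualNumber

/-- A submodule `V` of `A²` (where `A = k[ε]` is the ring of dual numbers) is free of
rank 1 if it is generated by a vector `v ∉ ε·A²`. -/
def IsFreeRankOne {k : Type*} [Field k]
    (V : Submodule (DualNumber k) (Fin 2 → DualNumber k)) : Prop :=
  ∃ v : Fin 2 → DualNumber k,
    (¬ ∃ u : Fin 2 → DualNumber k, v = (ε : DualNumber k) • u) ∧
    V = Submodule.span (DualNumber k) {v}

/-- `Fib g` is the set of free rank-1 `A`-submodules `V₂` of `A²` with `g·V₂ = V₂`. -/
def Fib {k : Type*} [Field k] (g : GL (Fin 2) (DualNumber k)) :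
    Set (Submodule (DualNumber k) (Fin 2 → DualNumber k)) :=
  {V | IsFreeRankOne V ∧
    Submodule.map (Matrix.mulVecLin (g : Matrix (Fin 2) (Fin 2) (DualNumber k))) V = V}

open TrivSqZeroExt DualNumber Submodule

lemma upperTriangular_scalar_mulVec {R : Type*} [CommRing R] (a b x y : R) :
    !![a, b; 0, a] *ᵥ ![x, y] = ![a * x + b * y, a * y] := by
  ext i; fin_cases i <;> simp [mulVec, dotProduct]

lemma mul_sq_eq_zero_of_upperTriangular_mulVec_eq_smul {R : Type*} [CommRing R] {a b c x y : R}
    (h : !![a, b; 0, a] *ᵥ ![x, y] = c • ![x, y]) : b * y ^ 2 = 0 := by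
  rw [upperTriangular_scalar_mulVec] at h
  have h0 : a * x + b * y = c * x := by simpa using congr_fun h 0
  have h1 : a * y = c * y := by simpa using congr_fun h 1
  linear_combination y * h0 - x * h1

namespace DualNumber

variable {k : Type*} [Field k]

lemma isUnit_iff_fst_ne_zero {x : k[ε]} : IsUnit x ↔ x.fst ≠ 0 := by
  rw [isUnit_iff_isUnit_fst, isUnit_iff_ne_zero]

lemma eq_snd_smul_eps_of_fst_eq_zero {x : k[ε]} (hx : x.fst = 0) : x = x.snd • ε := by
  ext <;> simp [hx]

lemma fst_eq_zero_of_mul_sq_eq_zero {b y : k[ε]} (hb : b ≠ 0) (h : b * y ^ 2 = 0) :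
    y.fst = 0 := by
  by_contra hy
  exact hb (((isUnit_iff_fst_ne_zero.mpr hy).pow 2).mul_left_eq_zero.mp h)

lemma exists_eq_eps_smul_iff {ι : Type*} (v : ι → k[ε]) :
    (∃ u, v = (ε : k[ε]) • u) ↔ ∀ i, (v i).fst = 0 := by
  constructor
  · rintro ⟨u, rfl⟩ i
    simp
  · intro hv
    refine ⟨fun i => inl (v i).snd, funext fun i => ?_⟩
    rw [eq_snd_smul_eps_of_fst_eq_zero (hv i)]
    ext <;> simp

end DualNumber

section EpsLine

variable {k : Type*} [Field k]

def epsLine (s : k) : Submodule k[ε] (Fin 2 → k[ε]) :=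
  span k[ε] {![1, s • ε]}

lemma epsLine_injective : Function.Injective (epsLine (k := k)) := by
  intro s t hst
  have hs : ![1, s • ε] ∈ epsLine t := hst ▸ mem_span_singleton_self _
  obtain ⟨c, hc⟩ := mem_span_singleton.mp hs
  have hc0 : c = 1 := by simpa using congr_fun hc 0
  simpa [hc0] using (congrArg snd (congr_fun hc 1)).symm

lemma isFreeRankOne_epsLine (s : k) : IsFreeRankOne (epsLine s) := by
  refine ⟨_, fun hv => ?_, rfl⟩
  simpa using (exists_eq_eps_smul_iff _).mp hv 0

lemma map_upperTriangular_scalar_epsLine {a b : k[ε]} (ha : IsUnit a) (hb : b * ε = 0) (s : k) :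
    map (mulVecLin !![a, b; 0, a]) (epsLine s) = epsLine s := by
  have hw : !![a, b; 0, a] *ᵥ ![1, s • ε] = a • ![1, s • ε] := by
    rw [upperTriangular_scalar_mulVec, mul_smul_comm, hb, smul_zero, add_zero]
    funext i; fin_cases i <;> simp
  rw [epsLine, map_span, Set.image_singleton, mulVecLin_apply, hw, span_singleton_smul_eq ha]

lemma span_pair_eq_epsLine {x y : k[ε]} (hx : x.fst ≠ 0) (hy : y.fst = 0) :
    span k[ε] {![x, y]} = epsLine (x⁻¹ * y).snd := by
  have hxy : x⁻¹ • ![x, y] = ![1, (x⁻¹ * y).snd • ε] := by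
    rw [← eq_snd_smul_eps_of_fst_eq_zero (by simp [hy])]
    funext i; fin_cases i <;> simp [TrivSqZeroExt.inv_mul_cancel hx]
  rw [epsLine, ← hxy, span_singleton_smul_eq (isUnit_iff_fst_ne_zero.mpr (by simpa using hx))]

lemma span_mem_range_epsLine {a b : k[ε]} (hb : b ≠ 0) {v : Fin 2 → k[ε]}
    (hv : ¬∃ u, v = (ε : k[ε]) • u) (hgv : !![a, b; 0, a] *ᵥ v ∈ span k[ε] {v}) :
    span k[ε] {v} ∈ Set.range epsLine := by
  obtain ⟨x, y, rfl⟩ : ∃ x y, v = ![x, y] := ⟨v 0, v 1, List.ofFn_inj.mp rfl⟩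
  obtain ⟨c, hc⟩ := mem_span_singleton.mp hgv
  have hy : y.fst = 0 :=
    fst_eq_zero_of_mul_sq_eq_zero hb (mul_sq_eq_zero_of_upperTriangular_mulVec_eq_smul hc.symm)
  have hx : x.fst ≠ 0 := fun hx => hv <| (exists_eq_eps_smul_iff _).mpr fun i => by
    fin_cases i <;> simpa
  exact ⟨_, (span_pair_eq_epsLine hx hy).symm⟩

end EpsLine

theorem fib_card_case_four_general {k : Type*} [Field k] [Fintype k]
    (a d b : DualNumber k) (ha : IsUnit a)
    (g : GL (Fin 2) (DualNumber k))
    (hg : (g : Matrix (Fin 2) (Fin 2) (DualNumber k)) = !![a, b; 0, d])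
    (had : a = d)
    (hb : ∃ z : DualNumber k, b = (ε : DualNumber k) * z)
    (hb' : b ≠ 0) :
    Nat.card (Fib g) = Fintype.card k := by
  subst had
  have hbε : b * ε = 0 := by
    obtain ⟨z, rfl⟩ := hb
    rw [mul_right_comm, DualNumber.eps_mul_eps, zero_mul]
  have hFib : Fib g = Set.range epsLine := by
    ext V
    constructor
    · rintro ⟨⟨v, hv, rfl⟩, hgV⟩
      rw [hg] at hgV
      exact span_mem_range_epsLine hb' hv (hgV ▸ mem_map_of_mem (mem_span_singleton_self v))
    · rintro ⟨s, rfl⟩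
      exact ⟨isFreeRankOne_epsLine s, hg ▸ map_upperTriangular_scalar_epsLine ha hbε s⟩
  rw [hFib, Nat.card_range_of_injective epsLine_injective, Nat.card_eq_fintype_card]

/-- Case 4: over `k = 𝔽_q`, if `g` is upper triangular with unit diagonal
entries `a, d` and upper-right entry `b`, with `a = d` and `b ∈ εA ∖ {0}`, then `Fib g`
has exactly `q` elements. -/
theorem fib_card_case_four {k : Type*} [Field k] [Fintype k]
    (a d b : DualNumber k) (ha : IsUnit a) (hd : IsUnit d)
    (g : GL (Fin 2) (DualNumber k))
    (hg : (g : Matrix (Fin 2) (Fin 2) (DualNumber k)) = !![a, b; 0, d])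
    (had : a = d)
    (hb : ∃ z : DualNumber k, b = (ε : DualNumber k) * z)
    (hb' : b ≠ 0) :
    Nat.card (Fib g) = Fintype.card k :=
  fib_card_case_four_general a d b ha g hg had hb hb'
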